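/- arXiv:1708.07369 — 2 statements merged into one kernel-verified Lean document; each statement's English description precedes it below -/
import Mathlib

section
/- Let F5 = {K_3, S_3}. Then c_k(F5) = g_k(F5) = 2k + 1 for every integer k ≥ 2, while c_1(F5) = 2 and g_1(F5) ≥ 3. In particular, F5 is k-nice for every k ≥ 2 but not for k = 1. -/
open SimpleGraph

/-- A monochromatic copy of `H` in `G` under the edge `k`-coloring `col`:
an injective map sending edges of `H` to edges of `G`, all of the same color. -/
def HasMonoCopy {V : Type*} {W : Type*} {k : ℕ} (G : SimpleGraph V)
    (col : Sym2 V → Fin k) (H : SimpleGraph W) : Prop :=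
  ∃ (i : Fin k) (f : W ↪ V), ∀ a b : W, H.Adj a b →
    G.Adj (f a) (f b) ∧ col s(f a, f b) = i

/-- A family of graphs. -/
abbrev GraphFam : Type 1 := Set ((W : Type) × SimpleGraph W)

/-- The coloring `col` of (the edges of) `G` contains no monochromatic copy of
any member of the family `F`. -/
def AvoidsFam {V : Type} {k : ℕ} (G : SimpleGraph V)
    (col : Sym2 V → Fin k) (F : GraphFam) : Prop :=
  ∀ H ∈ F, ¬ HasMonoCopy G col H.2

/-- The set of integers `s` such that the complete graph `K_s` admits a
`k`-coloring of its edges with no monochromatic copy of any member of `F`.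
`c_k(F)` is the greatest element of this set. -/
def cSet (k : ℕ) (F : GraphFam) : Set ℕ :=
  {s | ∃ col : Sym2 (Fin s) → Fin k,
    AvoidsFam (⊤ : SimpleGraph (Fin s)) col F}

/-- The set of integers `s` such that some finite graph `G` with chromatic number `s`
admits a `k`-coloring of its edges with no monochromatic copy of any member of `F`.
`g_k(F)` is the greatest element of this set. -/
def gSet (k : ℕ) (F : GraphFam) : Set ℕ :=
  {s | ∃ (V : Type) (_ : Fintype V) (G : SimpleGraph V)
    (col : Sym2 V → Fin k), G.chromaticNumber = (s : ℕ∞) ∧ AvoidsFam G col F}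

/-- The family `F₅ = {K₃, S₃}`, where `S₃ = K_{1,3}`. -/
def F5 : GraphFam :=
  {⟨Fin 3, (⊤ : SimpleGraph (Fin 3))⟩,
   ⟨Fin 1 ⊕ Fin 3, completeBipartiteGraph (Fin 1) (Fin 3)⟩}

/-!
If no colour class contains a `K_{1,3}`, every vertex has at most two edges of each colour, hence
degree at most `2k`, and greedy colouring gives chromatic number at most `2k + 1`; as `K_s` has
chromatic number `s`, this bounds both `c_k` and `g_k`. Conversely, take the vertices of
`K_{2k+1}` to be `ℤ/2k ∪ {∞}` and colour an edge by `⌊σ / 2⌋`, where `σ ∈ [0, 2k)` is the sum of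
its ends (`2a` for an edge `{a, ∞}`). A colour holds only two sums, while the edges at a finite
vertex have pairwise distinct sums; this rules out monochromatic stars and triangles except through
`∞`, where the parity of `2a` and `k ≥ 2` finish the argument. For `k = 1` every `K_3` is a
monochromatic triangle, whereas the 5-cycle has chromatic number 3, no triangle and no vertex of
degree 3.
-/

open Finset

section MonoCopies

variable {V : Type} {k : ℕ} {G : SimpleGraph V} {col : Sym2 V → Fin k}

lemma adj_and_col_eq_comm {i : Fin k} {x y : V} (h : G.Adj x y ∧ col s(x, y) = i) :
    G.Adj y x ∧ col s(y, x) = i :=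
  ⟨h.1.symm, Sym2.eq_swap (a := y) ▸ h.2⟩

lemma hasMonoCopy_triangle_iff :
    HasMonoCopy G col (⊤ : SimpleGraph (Fin 3)) ↔
      ∃ (i : Fin k) (x y z : V), G.Adj x y ∧ G.Adj x z ∧ G.Adj y z ∧
        col s(x, y) = i ∧ col s(x, z) = i ∧ col s(y, z) = i := by
  constructor
  · rintro ⟨i, f, hf⟩
    obtain ⟨hxy, cxy⟩ := hf 0 1 (by decide)
    obtain ⟨hxz, cxz⟩ := hf 0 2 (by decide)
    obtain ⟨hyz, cyz⟩ := hf 1 2 (by decide)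
    exact ⟨i, f 0, f 1, f 2, hxy, hxz, hyz, cxy, cxz, cyz⟩
  · rintro ⟨i, x, y, z, hxy, hxz, hyz, cxy, cxz, cyz⟩
    have := hxy.ne; have := hxz.ne; have := hyz.ne
    have exy := adj_and_col_eq_comm ⟨hxy, cxy⟩
    have exz := adj_and_col_eq_comm ⟨hxz, cxz⟩
    have eyz := adj_and_col_eq_comm ⟨hyz, cyz⟩
    refine ⟨i, ⟨![x, y, z], fun p q h => ?_⟩, fun p q h => ?_⟩
    · fin_cases p <;> fin_cases q <;> simp_all [eq_comm]
    · fin_cases p <;> fin_cases q <;>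
        first
          | exact absurd h (by decide)
          | exact ⟨hxy, cxy⟩ | exact ⟨hxz, cxz⟩ | exact ⟨hyz, cyz⟩
          | exact exy | exact exz | exact eyz

lemma hasMonoCopy_star_iff :
    HasMonoCopy G col (completeBipartiteGraph (Fin 1) (Fin 3)) ↔
      ∃ (i : Fin k) (v x y z : V), x ≠ y ∧ x ≠ z ∧ y ≠ z ∧ G.Adj v x ∧ G.Adj v y ∧ G.Adj v z ∧
        col s(v, x) = i ∧ col s(v, y) = i ∧ col s(v, z) = i := by
  constructor
  · rintro ⟨i, f, hf⟩
    obtain ⟨hx, cx⟩ := hf (.inl 0) (.inr 0) (by simp)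
    obtain ⟨hy, cy⟩ := hf (.inl 0) (.inr 1) (by simp)
    obtain ⟨hz, cz⟩ := hf (.inl 0) (.inr 2) (by simp)
    exact ⟨i, f (.inl 0), f (.inr 0), f (.inr 1), f (.inr 2), f.injective.ne (by decide),
      f.injective.ne (by decide), f.injective.ne (by decide), hx, hy, hz, cx, cy, cz⟩
  · rintro ⟨i, v, x, y, z, hxy, hxz, hyz, hx, hy, hz, cx, cy, cz⟩
    have := hx.ne; have := hy.ne; have := hz.ne
    have ex := adj_and_col_eq_comm ⟨hx, cx⟩
    have ey := adj_and_col_eq_comm ⟨hy, cy⟩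
    have ez := adj_and_col_eq_comm ⟨hz, cz⟩
    refine ⟨i, ⟨Sum.elim (fun _ => v) ![x, y, z], fun p q h => ?_⟩, fun p q h => ?_⟩
    · rcases p with p | p <;> rcases q with q | q <;> fin_cases p <;> fin_cases q <;>
        simp_all [eq_comm]
    · rcases p with p | p <;> rcases q with q | q <;> fin_cases p <;> fin_cases q <;>
        first
          | exact ⟨hx, cx⟩ | exact ⟨hy, cy⟩ | exact ⟨hz, cz⟩ | exact ex | exact ey | exact ez
          | simp at h

lemma avoidsFam_F5_iff :
    AvoidsFam G col F5 ↔
      ¬ HasMonoCopy G col (⊤ : SimpleGraph (Fin 3)) ∧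
        ¬ HasMonoCopy G col (completeBipartiteGraph (Fin 1) (Fin 3)) := by
  simp [AvoidsFam, F5]

lemma not_hasMonoCopy_of_card_lt [Fintype V] {W : Type*} [Fintype W] {H : SimpleGraph W}
    (h : Fintype.card V < Fintype.card W) : ¬ HasMonoCopy G col H :=
  fun ⟨_, f, _⟩ => h.not_ge (Fintype.card_le_of_embedding f)

end MonoCopies

lemma degree_le_of_not_hasMonoCopy_star {V : Type} [Fintype V] {k : ℕ} {G : SimpleGraph V}
    [DecidableRel G.Adj] {col : Sym2 V → Fin k}
    (h : ¬ HasMonoCopy G col (completeBipartiteGraph (Fin 1) (Fin 3))) (v : V) :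
    G.degree v ≤ 2 * k := by
  classical
  have fiber_le : ∀ i ∈ (univ : Finset (Fin k)),
      #{u ∈ G.neighborFinset v | col s(v, u) = i} ≤ 2 := by
    intro i _
    by_contra! hi
    obtain ⟨x, y, z, hx, hy, hz, hxy, hxz, hyz⟩ := two_lt_card_iff.1 hi
    simp only [mem_filter, mem_neighborFinset] at hx hy hz
    exact h (hasMonoCopy_star_iff.2
      ⟨i, v, x, y, z, hxy, hxz, hyz, hx.1, hy.1, hz.1, hx.2, hy.2, hz.2⟩)
  simpa using card_le_mul_card_image_of_maps_to (fun u _ => mem_univ (col s(v, u))) 2 fiber_le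

theorem colorable_of_forall_degree_le {V : Type*} [Fintype V] {G : SimpleGraph V}
    [DecidableRel G.Adj] {d : ℕ} (h : ∀ v, G.degree v ≤ d) : G.Colorable (d + 1) := by
  classical
  suffices ∀ s : Finset V, ∃ f : V → Fin (d + 1), ∀ u ∈ s, ∀ w ∈ s, G.Adj u w → f u ≠ f w by
    obtain ⟨f, hf⟩ := this univ
    exact ⟨Coloring.mk f fun huw => hf _ (mem_univ _) _ (mem_univ _) huw⟩
  intro s
  induction s using Finset.induction_on with
  | empty => exact ⟨0, by simp⟩
  | @insert a s ha ih =>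
    obtain ⟨f, hf⟩ := ih
    obtain ⟨c, -, hc⟩ : ∃ c ∈ univ, c ∉ (G.neighborFinset a).image f := by
      refine exists_mem_notMem_of_card_lt_card ?_
      calc #((G.neighborFinset a).image f) ≤ G.degree a := card_image_le
        _ < #(univ : Finset (Fin (d + 1))) := by simpa using Nat.lt_succ_of_le (h a)
    have hc : ∀ w, G.Adj a w → f w ≠ c := fun w hw hwc =>
      hc (mem_image.2 ⟨w, (mem_neighborFinset _ _ _).2 hw, hwc⟩)
    refine ⟨Function.update f a c, fun u hu w hw huw => ?_⟩
    rcases mem_insert.1 hu with rfl | hus <;> rcases mem_insert.1 hw with rfl | hws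
    · exact absurd rfl huw.ne
    · rw [Function.update_self, Function.update_of_ne (ne_of_mem_of_not_mem hws ha)]
      exact (hc w huw).symm
    · rw [Function.update_self, Function.update_of_ne (ne_of_mem_of_not_mem hus ha)]
      exact hc u huw.symm
    · rw [Function.update_of_ne (ne_of_mem_of_not_mem hus ha),
        Function.update_of_ne (ne_of_mem_of_not_mem hws ha)]
      exact hf u hus w hws huw

lemma le_of_mem_gSet_F5 {k s : ℕ} (hs : s ∈ gSet k F5) : s ≤ 2 * k + 1 := by
  obtain ⟨V, _, G, col, hχ, hG⟩ := hs
  classical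
  have hcol : G.Colorable (2 * k + 1) :=
    colorable_of_forall_degree_le (degree_le_of_not_hasMonoCopy_star (avoidsFam_F5_iff.1 hG).2)
  exact_mod_cast hχ ▸ hcol.chromaticNumber_le

lemma cSet_subset_gSet (k : ℕ) (F : GraphFam) : cSet k F ⊆ gSet k F :=
  fun s ⟨col, h⟩ => ⟨Fin s, inferInstance, ⊤, col, by simp [chromaticNumber_top], h⟩

lemma card_mem_cSet {V : Type} [Fintype V] {k : ℕ} {F : GraphFam} (col : Sym2 V → Fin k)
    (h : AvoidsFam (⊤ : SimpleGraph V) col F) : Fintype.card V ∈ cSet k F := by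
  let e := Fintype.equivFin V
  refine ⟨col ∘ Sym2.map e.symm, fun H hH ⟨i, f, hf⟩ =>
    h H hH ⟨i, f.trans e.symm.toEmbedding, fun a b hab => ?_⟩⟩
  obtain ⟨hadj, hcol⟩ := hf a b hab
  exact ⟨by simpa using hadj, by simpa using hcol⟩

section SumColoring

variable {A : Type} [AddCommGroup A] {k : ℕ}

/-- `none` plays the vertex `∞`: the edge `{a, ∞}` gets the sum `a + a` that the missing loop at `a`
would have, so the sums of the edges at any finite vertex are pairwise distinct. -/
def pairSum : Option A → Option A → A
  | some a, some b => a + b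
  | some a, none => a + a
  | none, some b => b + b
  | none, none => 0

lemma pairSum_comm (x y : Option A) : pairSum x y = pairSum y x := by
  cases x <;> cases y <;> simp [pairSum, add_comm]

lemma pairSum_some_left (a : A) (y : Option A) : pairSum (some a) y = a + y.getD a := by
  cases y <;> rfl

lemma eq_of_pairSum_some_left_eq {a : A} {y z : Option A} (hy : y ≠ some a) (hz : z ≠ some a)
    (h : pairSum (some a) y = pairSum (some a) z) : y = z := by
  rw [pairSum_some_left, pairSum_some_left, add_right_inj] at h
  cases y <;> cases z <;> simp_all [eq_comm]

def sumColoring (φ : A → Fin k) : Sym2 (Option A) → Fin k :=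
  Sym2.lift ⟨fun x y => φ (pairSum x y), fun x y => congrArg φ (pairSum_comm x y)⟩

variable {φ : A → Fin k}

lemma not_hasMonoCopy_triangle_sumColoring
    (h₁ : ∀ s t u, φ s = φ t → φ s = φ u → s = t ∨ s = u ∨ t = u)
    (h₂ : ∀ a b, φ (a + a) = φ (b + b) → φ (a + a) = φ (a + b) → a = b) :
    ¬ HasMonoCopy ⊤ (sumColoring φ) (⊤ : SimpleGraph (Fin 3)) := by
  rw [hasMonoCopy_triangle_iff]
  rintro ⟨i, x, y, z, hxy, hxz, hyz, cxy, cxz, cyz⟩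
  simp only [top_adj] at hxy hxz hyz
  simp only [sumColoring, Sym2.lift_mk] at cxy cxz cyz
  rcases x with _ | a <;> rcases y with _ | b <;> rcases z with _ | c <;>
    simp only [pairSum, ne_eq, reduceCtorEq, not_false_eq_true, Option.some.injEq,
      not_true_eq_false] at hxy hxz hyz cxy cxz cyz
  · exact hyz (h₂ b c (cxy.trans cxz.symm) (cxy.trans cyz.symm))
  · exact hxz (h₂ a c (cxy.trans cyz.symm) (cxy.trans cxz.symm))
  · exact hxy (h₂ a b (cxz.trans cyz.symm) (cxz.trans cxy.symm))
  · rcases h₁ _ _ _ (cxy.trans cxz.symm) (cxy.trans cyz.symm) with h | h | h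
    · exact hyz (add_left_cancel h)
    · exact hxz (add_right_cancel (b := b) (by rwa [add_comm c b]))
    · exact hxy (add_right_cancel h)

lemma not_hasMonoCopy_star_sumColoring
    (h₁ : ∀ s t u, φ s = φ t → φ s = φ u → s = t ∨ s = u ∨ t = u)
    (h₃ : ∀ a b c, φ (a + a) = φ (b + b) → φ (a + a) = φ (c + c) → a = b ∨ a = c ∨ b = c) :
    ¬ HasMonoCopy ⊤ (sumColoring φ) (completeBipartiteGraph (Fin 1) (Fin 3)) := by
  rw [hasMonoCopy_star_iff]
  rintro ⟨i, v, x, y, z, hxy, hxz, hyz, hvx, hvy, hvz, cx, cy, cz⟩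
  simp only [top_adj] at hvx hvy hvz
  simp only [sumColoring, Sym2.lift_mk] at cx cy cz
  rcases v with _ | a
  · obtain ⟨b, rfl⟩ := Option.ne_none_iff_exists'.1 hvx.symm
    obtain ⟨c, rfl⟩ := Option.ne_none_iff_exists'.1 hvy.symm
    obtain ⟨d, rfl⟩ := Option.ne_none_iff_exists'.1 hvz.symm
    simp only [pairSum] at cx cy cz
    rcases h₃ b c d (cx.trans cy.symm) (cx.trans cz.symm) with rfl | rfl | rfl <;> simp_all
  · rcases h₁ _ _ _ (cx.trans cy.symm) (cx.trans cz.symm) with h | h | h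
    · exact hxy (eq_of_pairSum_some_left_eq hvx.symm hvy.symm h)
    · exact hxz (eq_of_pairSum_some_left_eq hvx.symm hvz.symm h)
    · exact hyz (eq_of_pairSum_some_left_eq hvy.symm hvz.symm h)

end SumColoring

lemma ZMod.val_add_cases {n : ℕ} [NeZero n] (a b : ZMod n) :
    (a + b).val = a.val + b.val ∨ (a + b).val + n = a.val + b.val := by
  rcases lt_or_ge (a.val + b.val) n with h | h
  · exact .inl (ZMod.val_add_of_lt h)
  · exact .inr (ZMod.val_add_val_of_le h).symm

def halfResidue (k : ℕ) [NeZero k] (s : ZMod (2 * k)) : Fin k :=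
  ⟨s.val / 2, by have := s.val_lt; omega⟩

section HalfResidue

variable {k : ℕ} [NeZero k]

lemma halfResidue_eq_iff {s t : ZMod (2 * k)} :
    halfResidue k s = halfResidue k t ↔ s.val / 2 = t.val / 2 :=
  Fin.mk.injEq .. ▸ Iff.rfl

lemma eq_or_eq_or_eq_of_halfResidue_eq {s t u : ZMod (2 * k)}
    (hst : halfResidue k s = halfResidue k t) (hsu : halfResidue k s = halfResidue k u) :
    s = t ∨ s = u ∨ t = u := by
  rw [halfResidue_eq_iff] at hst hsu
  simp only [← (ZMod.val_injective (2 * k)).eq_iff]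
  omega

lemma eq_or_eq_or_eq_of_halfResidue_double_eq {a b c : ZMod (2 * k)}
    (hab : halfResidue k (a + a) = halfResidue k (b + b))
    (hac : halfResidue k (a + a) = halfResidue k (c + c)) : a = b ∨ a = c ∨ b = c := by
  rw [halfResidue_eq_iff] at hab hac
  have := a.val_lt; have := b.val_lt; have := c.val_lt
  have := ZMod.val_add_cases a a; have := ZMod.val_add_cases b b; have := ZMod.val_add_cases c c
  simp only [← (ZMod.val_injective (2 * k)).eq_iff]
  omega

lemma eq_of_halfResidue_double_eq (hk : 2 ≤ k) {a b : ZMod (2 * k)}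
    (hab : halfResidue k (a + a) = halfResidue k (b + b))
    (h : halfResidue k (a + a) = halfResidue k (a + b)) : a = b := by
  rw [halfResidue_eq_iff] at hab h
  have := a.val_lt; have := b.val_lt
  have := ZMod.val_add_cases a a; have := ZMod.val_add_cases b b
  have := ZMod.val_add_cases a b
  apply ZMod.val_injective (2 * k)
  omega

end HalfResidue

lemma two_mul_add_one_mem_cSet_F5 {k : ℕ} (hk : 2 ≤ k) : 2 * k + 1 ∈ cSet k F5 := by
  have : NeZero k := ⟨by omega⟩
  have := card_mem_cSet (sumColoring (halfResidue k)) <| avoidsFam_F5_iff.2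
    ⟨not_hasMonoCopy_triangle_sumColoring (fun _ _ _ => eq_or_eq_or_eq_of_halfResidue_eq)
      (fun _ _ => eq_of_halfResidue_double_eq hk),
    not_hasMonoCopy_star_sumColoring (fun _ _ _ => eq_or_eq_or_eq_of_halfResidue_eq)
      (fun _ _ _ => eq_or_eq_or_eq_of_halfResidue_double_eq)⟩
  simpa [ZMod.card] using this

lemma isGreatest_cSet_F5 {k : ℕ} (hk : 2 ≤ k) : IsGreatest (cSet k F5) (2 * k + 1) :=
  ⟨two_mul_add_one_mem_cSet_F5 hk, fun _ hs => le_of_mem_gSet_F5 (cSet_subset_gSet k F5 hs)⟩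

lemma isGreatest_gSet_F5 {k : ℕ} (hk : 2 ≤ k) : IsGreatest (gSet k F5) (2 * k + 1) :=
  ⟨cSet_subset_gSet k F5 (two_mul_add_one_mem_cSet_F5 hk), fun _ hs => le_of_mem_gSet_F5 hs⟩

lemma isGreatest_cSet_one_F5 : IsGreatest (cSet 1 F5) 2 := by
  refine ⟨⟨fun _ => 0, avoidsFam_F5_iff.2 ⟨not_hasMonoCopy_of_card_lt (by simp),
    not_hasMonoCopy_of_card_lt (by simp)⟩⟩, fun s ⟨col, h⟩ => ?_⟩
  by_contra! hs
  let f := Fin.castLEEmb (show 3 ≤ s by omega)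
  exact (avoidsFam_F5_iff.1 h).1
    ⟨0, f, fun a b hab => ⟨f.injective.ne hab, Subsingleton.elim _ _⟩⟩

lemma three_mem_gSet_one_F5 : 3 ∈ gSet 1 F5 := by
  refine ⟨Fin 5, inferInstance, cycleGraph 5, fun _ => 0,
    chromaticNumber_cycleGraph_of_odd 5 (by norm_num) (by decide), avoidsFam_F5_iff.2 ⟨?_, ?_⟩⟩
  · rw [hasMonoCopy_triangle_iff]
    rintro ⟨_, x, y, z, hxy, hxz, hyz, -⟩
    revert x y z
    decide
  · rw [hasMonoCopy_star_iff]
    rintro ⟨_, v, x, y, z, hxy, hxz, hyz, hx, hy, hz, -⟩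
    revert v x y z
    decide

/-- `c_k(F₅) = g_k(F₅) = 2k + 1` for every `k ≥ 2`, while `c₁(F₅) = 2` and
`g₁(F₅) ≥ 3`.  In particular `F₅` is `k`-nice for every `k ≥ 2` but not for `k = 1`. -/
theorem stmt1 :
    (∀ k : ℕ, 2 ≤ k →
        IsGreatest (cSet k F5) (2 * k + 1) ∧ IsGreatest (gSet k F5) (2 * k + 1)) ∧
    IsGreatest (cSet 1 F5) 2 ∧ (3 ∈ gSet 1 F5) ∧
    ¬ (∀ v : ℕ, IsGreatest (cSet 1 F5) v ↔ IsGreatest (gSet 1 F5) v) := by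
  refine ⟨fun k hk => ⟨isGreatest_cSet_F5 hk, isGreatest_gSet_F5 hk⟩,
    isGreatest_cSet_one_F5, three_mem_gSet_one_F5, fun h => ?_⟩
  have := ((h 2).1 isGreatest_cSet_one_F5).2 three_mem_gSet_one_F5
  omega
end

section
/- Let r be an integer with r ≡ 2 (mod 3) and r ≥ 5, and let K_{2r}^- denote the complete graph on 2r vertices with one edge removed. Then the edges of K_{2r}^- cannot be covered by r generalized triangle factors: for any r generalized triangle factors H_1,…,H_r on the same set of 2r vertices, the union of their edge sets does not contain a spanning subgraph isomorphic to K_{2r}^-. -/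
open SimpleGraph

/-- A generalized triangle factor: every connected component is a subgraph of a
triangle (a triangle, a path with two edges, a single edge, or an isolated
vertex); equivalently, every connected component has at most `3` vertices. -/
def IsGenTriangleFactor {V : Type*} (H : SimpleGraph V) : Prop :=
  ∀ C : H.ConnectedComponent, C.supp.ncard ≤ 3

/-- `G` is the union of the `r` graphs `H 0, …, H (r-1)` on the same vertex set:
its edge set is the union of their edge sets. -/
def IsUnionOf {V : Type*} (G : SimpleGraph V) {r : ℕ} (H : Fin r → SimpleGraph V) : Prop :=
  G = ⨆ i, H i

/-!
Measure a graph by its deficit `∑ v, (2 - deg v)`. A generalized triangle factor has maximum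
degree `2`, and by the handshake lemma the deficit of each connected component is even, so
every component other than a triangle contributes at least `2`. As `3 ∤ 2r`, not all
components are triangles, so each factor has deficit at least `2`; and since `2r ≡ 1 (mod 3)`,
a factor with a vertex of degree `1` has two non-triangle components, hence deficit at least `4`.

If the factors cover `K_{2r}` minus the edge `ab`, then every vertex other than `a, b` has total
deficit at most `1` over the `r` factors, and a vertex of odd total deficit has degree `1` in
some factor. With `O` the set of vertices of odd total deficit this gives
`4r + |O| ≤ 2 ∑ deficits ≤ 8 + 2|O| ≤ 8 + |O| + 2r`, i.e. `r ≤ 4`.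
-/

open Finset

lemma exists_eq_one_of_odd_sum_two_sub {ι : Type*} {s : Finset ι} {f : ι → ℕ}
    (hf : ∀ i ∈ s, f i ≤ 2) (h : Odd (∑ i ∈ s, (2 - f i))) : ∃ i ∈ s, f i = 1 := by
  by_contra! hne
  refine Nat.not_even_iff_odd.mpr h (even_sum _ fun i hi => ?_)
  obtain hfi | hfi : f i = 0 ∨ f i = 2 := by have := hf i hi; have := hne i hi; omega
  all_goals simp [hfi]

namespace SimpleGraph

variable {V : Type*} [Fintype V] (G : SimpleGraph V) [DecidableRel G.Adj]

/-- How far `G` is from being `2`-regular (truncated subtraction is harmless when the maximum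
degree is at most `2`). -/
def degreeDeficit : ℕ := ∑ v, (2 - G.degree v)

lemma card_degree_eq_one_le_degreeDeficit : #{v | G.degree v = 1} ≤ G.degreeDeficit := by
  rw [card_filter]
  exact sum_le_sum fun v _ => by split_ifs <;> omega

variable [DecidableEq V]

lemma degree_lt_ncard_supp (v : V) : G.degree v < (G.connectedComponentMk v).supp.ncard := by
  rw [Set.ncard_eq_toFinset_card', ← card_neighborFinset_eq_degree]
  refine card_lt_card ⟨fun u hu => ?_, fun h => ?_⟩
  · rw [mem_neighborFinset] at hu
    simpa using ((G.connectedComponentMk v).mem_supp_congr_adj hu).1 rfl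
  · simpa using h (by simp : v ∈ _)

lemma sum_connectedComponent_sum_supp {M : Type*} [AddCommMonoid M] (f : V → M) :
    ∑ C : G.ConnectedComponent, ∑ v ∈ C.supp.toFinset, f v = ∑ v, f v := by
  classical
  rw [← sum_fiberwise univ G.connectedComponentMk f]
  congr! with C
  ext v
  simp [ConnectedComponent.mem_supp_iff]

lemma ConnectedComponent.even_sum_degree (C : G.ConnectedComponent) :
    Even (∑ v ∈ C.supp.toFinset, G.degree v) := by
  have hdeg (v : C.supp) : (G.induce C.supp).degree v = G.degree v :=
    degree_induce_of_neighborSet_subset fun _ hu => C.mem_supp_of_adj_mem_supp v.2 hu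
  rw [← sum_set_coe, ← sum_congr rfl fun v _ => hdeg v, sum_degrees_eq_twice_card_edges]
  exact even_two_mul _

def ConnectedComponent.degreeDeficit (C : G.ConnectedComponent) : ℕ :=
  ∑ v ∈ C.supp.toFinset, (2 - G.degree v)

lemma sum_degreeDeficit_connectedComponent :
    ∑ C : G.ConnectedComponent, C.degreeDeficit = G.degreeDeficit :=
  G.sum_connectedComponent_sum_supp _

end SimpleGraph

namespace IsGenTriangleFactor

variable {V : Type*} [Fintype V] [DecidableEq V] {G : SimpleGraph V} [DecidableRel G.Adj]

lemma degree_le_two (hG : IsGenTriangleFactor G) (v : V) : G.degree v ≤ 2 := by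
  have := G.degree_lt_ncard_supp v
  have := hG (G.connectedComponentMk v)
  omega

lemma even_degreeDeficit_connectedComponent (hG : IsGenTriangleFactor G)
    (C : G.ConnectedComponent) : Even C.degreeDeficit := by
  have h : C.degreeDeficit + ∑ v ∈ C.supp.toFinset, G.degree v = 2 * #C.supp.toFinset := by
    rw [ConnectedComponent.degreeDeficit, ← sum_add_distrib,
      sum_congr rfl fun v _ => Nat.sub_add_cancel (hG.degree_le_two v), sum_const, smul_eq_mul,
      mul_comm]
  exact (Nat.even_add.mp (h ▸ even_two_mul _)).mpr C.even_sum_degree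

lemma ncard_supp_eq_three (hG : IsGenTriangleFactor G) {C : G.ConnectedComponent}
    (hC : C.degreeDeficit = 0) : C.supp.ncard = 3 := by
  obtain ⟨v, hv⟩ := C.nonempty_supp
  have hv2 := sum_eq_zero_iff.mp hC v (Set.mem_toFinset.mpr hv)
  have hlt := G.degree_lt_ncard_supp v
  rw [(C.mem_supp_iff v).mp hv] at hlt
  have := hG.degree_le_two v
  have := hG C
  omega

lemma two_mul_card_le_degreeDeficit (hG : IsGenTriangleFactor G) :
    2 * #{C : G.ConnectedComponent | C.degreeDeficit ≠ 0} ≤ G.degreeDeficit := by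
  rw [← G.sum_degreeDeficit_connectedComponent, ← sum_filter_ne_zero, mul_comm, ← smul_eq_mul]
  refine card_nsmul_le_sum _ _ _ fun C hC => ?_
  obtain ⟨k, hk⟩ := hG.even_degreeDeficit_connectedComponent C
  have := (mem_filter.mp hC).2
  omega

lemma card_mod_three (hG : IsGenTriangleFactor G) :
    Fintype.card V % 3
      = (∑ C : G.ConnectedComponent with C.degreeDeficit ≠ 0, C.supp.ncard) % 3 := by
  have hcard : Fintype.card V = ∑ C : G.ConnectedComponent, C.supp.ncard := by
    have h := (G.sum_connectedComponent_sum_supp fun _ => 1).symm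
    simp only [sum_const, smul_eq_mul, mul_one, card_univ] at h
    simp only [h, Set.ncard_eq_toFinset_card']
  have htriangles : ∑ C : G.ConnectedComponent with ¬C.degreeDeficit ≠ 0, C.supp.ncard
      = 3 * #{C : G.ConnectedComponent | ¬C.degreeDeficit ≠ 0} := by
    rw [sum_congr rfl fun C hC => hG.ncard_supp_eq_three (not_not.mp (mem_filter.mp hC).2),
      sum_const, smul_eq_mul, mul_comm]
  rw [hcard, ← sum_filter_add_sum_filter_not univ fun C => C.degreeDeficit ≠ 0, htriangles]
  omega

lemma two_le_degreeDeficit (hG : IsGenTriangleFactor G) (hV : Fintype.card V % 3 ≠ 0) :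
    2 ≤ G.degreeDeficit := by
  have hne : ({C : G.ConnectedComponent | C.degreeDeficit ≠ 0} : Finset _).Nonempty :=
    nonempty_of_sum_ne_zero (f := fun C => C.supp.ncard) fun h =>
      hV (by simp [hG.card_mod_three, h])
  have := hG.two_mul_card_le_degreeDeficit
  have := hne.card_pos
  omega

lemma four_le_degreeDeficit (hG : IsGenTriangleFactor G) (hV : Fintype.card V % 3 = 1)
    {v : V} (hv : G.degree v = 1) : 4 ≤ G.degreeDeficit := by
  obtain ⟨C, hvC⟩ : ∃ C, G.connectedComponentMk v = C := ⟨_, rfl⟩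
  have hC : C ∈ ({C : G.ConnectedComponent | C.degreeDeficit ≠ 0} : Finset _) := by
    have : 2 - G.degree v ≤ C.degreeDeficit :=
      single_le_sum (f := fun v => 2 - G.degree v) (fun _ _ => Nat.zero_le _)
      (Set.mem_toFinset.mpr ((C.mem_supp_iff v).mpr hvC))
    exact mem_filter.mpr ⟨mem_univ _, by omega⟩
  have hsize : C.supp.ncard = 2 ∨ C.supp.ncard = 3 := by
    have := G.degree_lt_ncard_supp v
    have := hG C
    subst hvC
    omega
  suffices 2 ≤ #{C : G.ConnectedComponent | C.degreeDeficit ≠ 0} by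
    have := hG.two_mul_card_le_degreeDeficit
    omega
  by_contra! h
  have hsum : ∑ C : G.ConnectedComponent with C.degreeDeficit ≠ 0, C.supp.ncard = C.supp.ncard :=
    sum_eq_single_of_mem C hC fun C' hC' hne =>
      absurd (card_le_one.mp (by omega) C' hC' C hC) hne
  have := hG.card_mod_three
  omega

lemma four_add_card_degree_eq_one_le (hG : IsGenTriangleFactor G) (hV : Fintype.card V % 3 = 1) :
    4 + #{v | G.degree v = 1} ≤ 2 * G.degreeDeficit := by
  have := G.card_degree_eq_one_le_degreeDeficit
  by_cases h : ∃ v, G.degree v = 1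
  · obtain ⟨v, hv⟩ := h
    have := hG.four_le_degreeDeficit hV hv
    omega
  · have : #{v | G.degree v = 1} = 0 := by simpa using h
    have := hG.two_le_degreeDeficit (by omega)
    omega

end IsGenTriangleFactor

namespace SimpleGraph

variable {V : Type*} [Fintype V] [DecidableEq V]

lemma card_sub_one_sub_card_le_degree (G : SimpleGraph V) [DecidableRel G.Adj] {v : V}
    (s : Finset V) (h : ∀ u, u ≠ v → u ∉ s → G.Adj v u) :
    Fintype.card V - 1 - #s ≤ G.degree v := by
  have hsub : (univ.erase v) \ s ⊆ G.neighborFinset v := fun u hu => by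
    simp only [mem_sdiff, mem_erase] at hu
    exact (mem_neighborFinset _ _ _).mpr (h u hu.1.1 hu.2)
  have := le_card_sdiff s (univ.erase v)
  rw [card_erase_of_mem (mem_univ v), card_univ] at this
  rw [← card_neighborFinset_eq_degree]
  exact this.trans (card_le_card hsub)

section

variable {G : SimpleGraph V} [DecidableRel G.Adj] {a b : V}

lemma card_sub_one_le_degree_of_forall_adj (hG : ∀ u v, u ≠ v → s(u, v) ≠ s(a, b) → G.Adj u v)
    {v : V} (hva : v ≠ a) (hvb : v ≠ b) : Fintype.card V - 1 ≤ G.degree v := by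
  simpa using G.card_sub_one_sub_card_le_degree ∅ fun u huv _ =>
    hG v u huv.symm fun h => by rcases Sym2.eq_iff.mp h with ⟨h, -⟩ | ⟨h, -⟩ <;> contradiction

lemma card_sub_two_le_degree_of_forall_adj (hG : ∀ u v, u ≠ v → s(u, v) ≠ s(a, b) → G.Adj u v)
    (v : V) : Fintype.card V - 2 ≤ G.degree v := by
  have := G.card_sub_one_sub_card_le_degree {if v = a then b else a} fun u huv hu =>
    hG v u huv.symm fun h => by
      split_ifs at hu with hva <;> rcases Sym2.eq_iff.mp h with ⟨h1, h2⟩ | ⟨h1, h2⟩ <;> simp_all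
  simpa using this

end

variable {ι : Type*} [Fintype ι] (H : ι → SimpleGraph V) [∀ i, DecidableRel (H i).Adj]

lemma degree_iSup_le_sum_degree [DecidableRel (⨆ i, H i).Adj] (v : V) :
    (⨆ i, H i).degree v ≤ ∑ i, (H i).degree v := by
  simp_rw [← card_neighborFinset_eq_degree]
  refine (card_le_card fun u hu => ?_).trans card_biUnion_le
  obtain ⟨i, hi⟩ := iSup_adj.mp ((mem_neighborFinset _ _ _).mp hu)
  exact mem_biUnion.mpr ⟨i, mem_univ i, (mem_neighborFinset _ _ _).mpr hi⟩

variable {H}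

lemma sum_two_sub_degree_add_degree_iSup_le [DecidableRel (⨆ i, H i).Adj]
    (hH : ∀ i v, (H i).degree v ≤ 2) (v : V) :
    ∑ i, (2 - (H i).degree v) + (⨆ i, H i).degree v ≤ 2 * Fintype.card ι := by
  have h : ∑ i, (2 - (H i).degree v) + ∑ i, (H i).degree v = 2 * Fintype.card ι := by
    rw [← sum_add_distrib, sum_congr rfl fun i _ => Nat.sub_add_cancel (hH i v), sum_const,
      card_univ, smul_eq_mul, mul_comm]
  have := degree_iSup_le_sum_degree H v
  omega

lemma card_odd_sum_two_sub_degree_le (hH : ∀ i v, (H i).degree v ≤ 2) :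
    #{v | Odd (∑ i, (2 - (H i).degree v))} ≤ ∑ i, #{v | (H i).degree v = 1} := by
  refine (card_le_card fun v hv => ?_).trans card_biUnion_le
  obtain ⟨i, -, hi⟩ :=
    exists_eq_one_of_odd_sum_two_sub (fun i _ => hH i v) (mem_filter.mp hv).2
  exact mem_biUnion.mpr ⟨i, mem_univ i, mem_filter.mpr ⟨mem_univ v, hi⟩⟩

variable [DecidableRel (⨆ i, H i).Adj] {a b : V}

lemma sum_two_sub_degree_le_two_of_forall_adj (hH : ∀ i v, (H i).degree v ≤ 2)
    (hV : Fintype.card V = 2 * Fintype.card ι)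
    (hcov : ∀ u v, u ≠ v → s(u, v) ≠ s(a, b) → (⨆ i, H i).Adj u v) (v : V) :
    ∑ i, (2 - (H i).degree v) ≤ 2 := by
  have := sum_two_sub_degree_add_degree_iSup_le hH v
  have := card_sub_two_le_degree_of_forall_adj hcov v
  omega

lemma sum_two_sub_degree_le_one_of_forall_adj (hH : ∀ i v, (H i).degree v ≤ 2)
    (hV : Fintype.card V = 2 * Fintype.card ι)
    (hcov : ∀ u v, u ≠ v → s(u, v) ≠ s(a, b) → (⨆ i, H i).Adj u v) {v : V} (hva : v ≠ a)
    (hvb : v ≠ b) : ∑ i, (2 - (H i).degree v) ≤ 1 := by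
  have := sum_two_sub_degree_add_degree_iSup_le hH v
  have := card_sub_one_le_degree_of_forall_adj hcov hva hvb
  omega

lemma sum_degreeDeficit_le_of_forall_adj (hH : ∀ i v, (H i).degree v ≤ 2)
    (hV : Fintype.card V = 2 * Fintype.card ι)
    (hcov : ∀ u v, u ≠ v → s(u, v) ≠ s(a, b) → (⨆ i, H i).Adj u v) :
    ∑ i, (H i).degreeDeficit ≤ 4 + #{v | Odd (∑ i, (2 - (H i).degree v))} := by
  have hd (v : V) : ∑ i, (2 - (H i).degree v)
      ≤ (if Odd (∑ i, (2 - (H i).degree v)) then 1 else 0) + (if v = a ∨ v = b then 2 else 0) := by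
    by_cases hv : v = a ∨ v = b
    · rw [if_pos hv]
      exact (sum_two_sub_degree_le_two_of_forall_adj hH hV hcov v).trans le_add_self
    · rw [if_neg hv, add_zero]
      push Not at hv
      have := sum_two_sub_degree_le_one_of_forall_adj hH hV hcov hv.1 hv.2
      split_ifs with hodd
      · exact this
      · obtain ⟨k, hk⟩ := Nat.not_odd_iff_even.mp hodd
        omega
  have hcard_ab : #{v | v = a ∨ v = b} ≤ 2 :=
    (card_le_card (t := {a, b}) fun v hv => by simpa using hv).trans card_le_two
  calc ∑ i, (H i).degreeDeficit = ∑ v, ∑ i, (2 - (H i).degree v) := sum_comm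
    _ ≤ ∑ v, ((if Odd (∑ i, (2 - (H i).degree v)) then 1 else 0)
          + (if v = a ∨ v = b then 2 else 0)) := sum_le_sum fun v _ => hd v
    _ = #{v | Odd (∑ i, (2 - (H i).degree v))} + 2 * #{v | v = a ∨ v = b} := by
      simp [sum_add_distrib, sum_ite, mul_comm]
    _ ≤ 4 + #{v | Odd (∑ i, (2 - (H i).degree v))} := by omega

end SimpleGraph

/-- For `r ≡ 2 (mod 3)`, `r ≥ 5`, the union of any `r` generalized triangle
factors on `2r` vertices does not contain `K_{2r}` minus an edge as a spanning
subgraph: there is no pair of vertices `a ≠ b` such that all pairs of distinct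
vertices other than `{a, b}` are adjacent in the union. -/
theorem stmt12 (r : ℕ) (hr : 5 ≤ r) (hmod : r % 3 = 2)
    (H : Fin r → SimpleGraph (Fin (2 * r)))
    (hH : ∀ i, IsGenTriangleFactor (H i)) :
    ¬ ∃ a b : Fin (2 * r), a ≠ b ∧
      ∀ u v : Fin (2 * r), u ≠ v → s(u, v) ≠ s(a, b) → (⨆ i, H i).Adj u v := by
  classical
  rintro ⟨a, b, -, hcov⟩
  have hV : Fintype.card (Fin (2 * r)) % 3 = 1 := by rw [Fintype.card_fin]; omega
  have hdeg i := (hH i).degree_le_two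
  have hupper := sum_degreeDeficit_le_of_forall_adj hdeg (by simp) hcov
  have hodd := card_odd_sum_two_sub_degree_le hdeg
  have hodd_le : #{v | Odd (∑ i, (2 - (H i).degree v))} ≤ 2 * r :=
    card_le_univ _ |>.trans_eq (Fintype.card_fin _)
  have hlower : ∑ i, (4 + #{v | (H i).degree v = 1}) ≤ 2 * ∑ i, (H i).degreeDeficit := by
    rw [mul_sum]
    exact sum_le_sum fun i _ => (hH i).four_add_card_degree_eq_one_le hV
  rw [sum_add_distrib, sum_const, card_univ, Fintype.card_fin, smul_eq_mul] at hlower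
  omega
end
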